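/- Let (V,⟨·,·⟩) be a real inner product space of dimension n ≥ 4 and let R be an algebraic curvature tensor on V having nonnegative curvature operator of the second kind (that is, R̊(φ,φ) ≥ 0 for every traceless symmetric bilinear form φ on V). Then R has nonnegative complex sectional curvature (weakly PIC2): for every orthonormal four-frame {e_1,e_2,e_3,e_4} in V and all λ, μ ∈ [-1,1], one has R_{1313} + λ²R_{1414} + μ²R_{2323} + λ²μ²R_{2424} - 2λμR_{1234} ≥ 0. -/

import Mathlib

/-!
If `x ⊥ z`, `y ⊥ w`, `x ⊥ w`, `y ⊥ z`, the forms `φ = x ⊙ z - λμ y ⊙ w` and `ψ = λ x ⊙ w + μ y ⊙ z`,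
with `p ⊙ q = ⟪·, p⟫⟪·, q⟫ + ⟪·, q⟫⟪·, p⟫`, are traceless. The symmetries of `R` and the Bianchi
identity give `R̊(φ, φ) + R̊(ψ, ψ) = 2 Q(λ, μ) + 12 λμ R(x, y, z, w)`, where
`Q(λ, μ) = R_xzxz + λ² R_xwxw + μ² R_yzyz + λ²μ² R_ywyw`. Using this for `λ` and `-λ` yields
`6 |λμ R(x, y, z, w)| ≤ Q(λ, μ)`, which is more than the claimed `2 λμ R(x, y, z, w) ≤ Q(λ, μ)`.
-/

open scoped RealInnerProductSpace

variable {V : Type*} [NormedAddCommGroup V] [InnerProductSpace ℝ V]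

/-- `R` is an algebraic curvature tensor: antisymmetric in the first two slots,
symmetric under exchange of the first and second pairs, and satisfying the
first Bianchi identity. -/
def IsAlgCurvatureTensor (R : V →ₗ[ℝ] V →ₗ[ℝ] V →ₗ[ℝ] V →ₗ[ℝ] ℝ) : Prop :=
  (∀ x y z w : V, R x y z w = - R y x z w) ∧
  (∀ x y z w : V, R x y z w = R z w x y) ∧
  (∀ x y z w : V, R x y z w + R y z x w + R z x y w = 0)

/-- The Ricci curvature `Ric(x,y) = Σ_j R(x,e_j,y,e_j)` with respect to an
orthonormal basis. -/
noncomputable def ricci {n : ℕ} (b : OrthonormalBasis (Fin n) ℝ V)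
    (R : V →ₗ[ℝ] V →ₗ[ℝ] V →ₗ[ℝ] V →ₗ[ℝ] ℝ) (x y : V) : ℝ :=
  ∑ j, R x (b j) y (b j)

/-- The scalar curvature `S = Σ_{i,j} R_{ijij}`. -/
noncomputable def scalarCurv {n : ℕ} (b : OrthonormalBasis (Fin n) ℝ V)
    (R : V →ₗ[ℝ] V →ₗ[ℝ] V →ₗ[ℝ] V →ₗ[ℝ] ℝ) : ℝ :=
  ∑ i, ∑ j, R (b i) (b j) (b i) (b j)

/-- `φ` is a symmetric bilinear form which is traceless with respect to the
orthonormal basis `b`. -/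
def IsTracelessSymForm {n : ℕ} (b : OrthonormalBasis (Fin n) ℝ V)
    (φ : V →ₗ[ℝ] V →ₗ[ℝ] ℝ) : Prop :=
  (∀ x y : V, φ x y = φ y x) ∧ (∑ i, φ (b i) (b i) = 0)

/-- The inner product `⟨φ,ψ⟩ = Σ_{i,j} φ(e_i,e_j) ψ(e_i,e_j)` of bilinear forms. -/
noncomputable def formInner {n : ℕ} (b : OrthonormalBasis (Fin n) ℝ V)
    (φ ψ : V →ₗ[ℝ] V →ₗ[ℝ] ℝ) : ℝ :=
  ∑ i, ∑ j, φ (b i) (b j) * ψ (b i) (b j)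

/-- The curvature operator of the second kind
`R̊(φ,ψ) = Σ_{i,j,k,l} R_{ijkl} φ(e_i,e_l) ψ(e_j,e_k)`. -/
noncomputable def secondKind {n : ℕ} (b : OrthonormalBasis (Fin n) ℝ V)
    (R : V →ₗ[ℝ] V →ₗ[ℝ] V →ₗ[ℝ] V →ₗ[ℝ] ℝ)
    (φ ψ : V →ₗ[ℝ] V →ₗ[ℝ] ℝ) : ℝ :=
  ∑ i, ∑ j, ∑ k, ∑ l,
    R (b i) (b j) (b k) (b l) * φ (b i) (b l) * ψ (b j) (b k)

/-- `R` has `k`-nonnegative curvature operator of the second kind: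
`Σ_{a=1}^k R̊(φ_a,φ_a) ≥ 0` for every orthonormal `k`-tuple of traceless
symmetric bilinear forms. -/
def kNonnegSecondKind {n : ℕ} (b : OrthonormalBasis (Fin n) ℝ V)
    (R : V →ₗ[ℝ] V →ₗ[ℝ] V →ₗ[ℝ] V →ₗ[ℝ] ℝ) (k : ℕ) : Prop :=
  ∀ φ : Fin k → (V →ₗ[ℝ] V →ₗ[ℝ] ℝ),
    (∀ a, IsTracelessSymForm b (φ a)) →
    (∀ a a', formInner b (φ a) (φ a') = if a = a' then 1 else 0) →
    0 ≤ ∑ a, secondKind b R (φ a) (φ a)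

/-- `R` has `k`-positive curvature operator of the second kind:
`Σ_{a=1}^k R̊(φ_a,φ_a) > 0` for every orthonormal `k`-tuple of traceless
symmetric bilinear forms. -/
def kPosSecondKind {n : ℕ} (b : OrthonormalBasis (Fin n) ℝ V)
    (R : V →ₗ[ℝ] V →ₗ[ℝ] V →ₗ[ℝ] V →ₗ[ℝ] ℝ) (k : ℕ) : Prop :=
  ∀ φ : Fin k → (V →ₗ[ℝ] V →ₗ[ℝ] ℝ),
    (∀ a, IsTracelessSymForm b (φ a)) →
    (∀ a a', formInner b (φ a) (φ a') = if a = a' then 1 else 0) →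
    0 < ∑ a, secondKind b R (φ a) (φ a)

namespace IsAlgCurvatureTensor

variable {R : V →ₗ[ℝ] V →ₗ[ℝ] V →ₗ[ℝ] V →ₗ[ℝ] ℝ} (hR : IsAlgCurvatureTensor R)
include hR

lemma antisymm_left (x y z w : V) : R y x z w = -R x y z w := hR.1 y x z w

lemma pair_symm (x y z w : V) : R z w x y = R x y z w := (hR.2.1 x y z w).symm

lemma antisymm_right (x y z w : V) : R x y w z = -R x y z w := by
  rw [← hR.pair_symm, hR.antisymm_left, hR.pair_symm]

lemma swap_pairs (x y z w : V) : R y x w z = R x y z w := by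
  rw [hR.antisymm_left, hR.antisymm_right, neg_neg]

lemma bianchi (x y z w : V) : R x y z w + R y z x w + R z x y w = 0 := hR.2.2 x y z w

lemma apply_self_left (x z w : V) : R x x z w = 0 := by
  linarith [hR.antisymm_left x x z w]

end IsAlgCurvatureTensor

noncomputable def tensorForm (p q : V) : V →ₗ[ℝ] V →ₗ[ℝ] ℝ :=
  (LinearMap.mul ℝ ℝ).compl₁₂ ((innerₗ V).flip p) ((innerₗ V).flip q)

@[simp]
lemma tensorForm_apply (p q x y : V) : tensorForm p q x y = ⟪x, p⟫ * ⟪y, q⟫ := rfl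

noncomputable def symTensorForm (p q : V) : V →ₗ[ℝ] V →ₗ[ℝ] ℝ :=
  tensorForm p q + tensorForm q p

lemma OrthonormalBasis.apply_eq_sum_inner_smul {ι M : Type*} [Fintype ι] [AddCommMonoid M]
    [Module ℝ M] (b : OrthonormalBasis ι ℝ V) (T : V →ₗ[ℝ] M) (x : V) :
    T x = ∑ i, ⟪b i, x⟫ • T (b i) := by
  conv_lhs => rw [← b.sum_repr' x]
  simp only [map_sum, map_smul]

section Traceless

variable {n : ℕ} {b : OrthonormalBasis (Fin n) ℝ V} {φ ψ : V →ₗ[ℝ] V →ₗ[ℝ] ℝ}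

lemma IsTracelessSymForm.add (hφ : IsTracelessSymForm b φ) (hψ : IsTracelessSymForm b ψ) :
    IsTracelessSymForm b (φ + ψ) := by
  refine ⟨fun x y => ?_, ?_⟩
  · simp only [LinearMap.add_apply, hφ.1 x y, hψ.1 x y]
  · simp only [LinearMap.add_apply, Finset.sum_add_distrib, hφ.2, hψ.2, add_zero]

lemma IsTracelessSymForm.smul (c : ℝ) (hφ : IsTracelessSymForm b φ) :
    IsTracelessSymForm b (c • φ) := by
  refine ⟨fun x y => ?_, ?_⟩
  · simp only [LinearMap.smul_apply, hφ.1 x y]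
  · simp only [LinearMap.smul_apply, smul_eq_mul, ← Finset.mul_sum, hφ.2, mul_zero]

lemma isTracelessSymForm_symTensorForm {p q : V} (h : ⟪p, q⟫ = 0) :
    IsTracelessSymForm b (symTensorForm p q) := by
  refine ⟨fun x y => ?_, ?_⟩
  · simp only [symTensorForm, LinearMap.add_apply, tensorForm_apply]
    ring
  · have hsum : ∑ i, ⟪b i, p⟫ * ⟪b i, q⟫ = 0 := by
      rw [← h, ← b.sum_inner_mul_inner]
      exact Finset.sum_congr rfl fun i _ => by rw [real_inner_comm (b i) p]
    simp only [symTensorForm, LinearMap.add_apply, tensorForm_apply, mul_comm ⟪b _, q⟫,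
      ← two_mul, ← Finset.mul_sum, hsum, mul_zero]

end Traceless

section SecondKind

variable {n : ℕ} (b : OrthonormalBasis (Fin n) ℝ V) (R : V →ₗ[ℝ] V →ₗ[ℝ] V →ₗ[ℝ] V →ₗ[ℝ] ℝ)
  (φ φ' ψ ψ' : V →ₗ[ℝ] V →ₗ[ℝ] ℝ) (c : ℝ)

lemma secondKind_add_left :
    secondKind b R (φ + φ') ψ = secondKind b R φ ψ + secondKind b R φ' ψ := by
  simp only [secondKind, LinearMap.add_apply, mul_add, add_mul, Finset.sum_add_distrib]

lemma secondKind_add_right :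
    secondKind b R φ (ψ + ψ') = secondKind b R φ ψ + secondKind b R φ ψ' := by
  simp only [secondKind, LinearMap.add_apply, mul_add, Finset.sum_add_distrib]

lemma secondKind_smul_left : secondKind b R (c • φ) ψ = c * secondKind b R φ ψ := by
  simp only [secondKind, LinearMap.smul_apply, smul_eq_mul, Finset.mul_sum]
  refine Finset.sum_congr rfl fun i _ => Finset.sum_congr rfl fun j _ =>
    Finset.sum_congr rfl fun k _ => Finset.sum_congr rfl fun l _ => ?_
  ring

lemma secondKind_smul_right : secondKind b R φ (c • ψ) = c * secondKind b R φ ψ := by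
  simp only [secondKind, LinearMap.smul_apply, smul_eq_mul, Finset.mul_sum]
  refine Finset.sum_congr rfl fun i _ => Finset.sum_congr rfl fun j _ =>
    Finset.sum_congr rfl fun k _ => Finset.sum_congr rfl fun l _ => ?_
  ring

lemma secondKind_tensorForm (p q r s : V) :
    secondKind b R (tensorForm p q) (tensorForm r s) = R p r s q := by
  simp only [b.apply_eq_sum_inner_smul R p, b.apply_eq_sum_inner_smul (R _) r,
    b.apply_eq_sum_inner_smul (R _ _) s, b.apply_eq_sum_inner_smul (R _ _ _) q,
    LinearMap.sum_apply, LinearMap.smul_apply, smul_eq_mul, Finset.mul_sum, secondKind,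
    tensorForm_apply]
  refine Finset.sum_congr rfl fun i _ => Finset.sum_congr rfl fun j _ =>
    Finset.sum_congr rfl fun k _ => Finset.sum_congr rfl fun l _ => ?_
  ring

variable {R}

lemma IsAlgCurvatureTensor.secondKind_symTensorForm (hR : IsAlgCurvatureTensor R) (p q r s : V) :
    secondKind b R (symTensorForm p q) (symTensorForm r s) = 2 * (R p r s q + R p s r q) := by
  simp only [symTensorForm, secondKind_add_left, secondKind_add_right, secondKind_tensorForm]
  rw [hR.pair_symm s p q r, hR.swap_pairs p s r q, hR.pair_symm r p q s, hR.swap_pairs p r s q]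
  ring

lemma IsAlgCurvatureTensor.secondKind_add_secondKind (hR : IsAlgCurvatureTensor R)
    (x y z w : V) (l m : ℝ) :
    secondKind b R (symTensorForm x z + (-(l * m)) • symTensorForm y w)
        (symTensorForm x z + (-(l * m)) • symTensorForm y w)
      + secondKind b R (l • symTensorForm x w + m • symTensorForm y z)
        (l • symTensorForm x w + m • symTensorForm y z)
      = 2 * (R x z x z + l ^ 2 * R x w x w + m ^ 2 * R y z y z + l ^ 2 * m ^ 2 * R y w y w)
        + 12 * l * m * R x y z w := by
  simp only [secondKind_add_left, secondKind_add_right, secondKind_smul_left,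
    secondKind_smul_right, hR.secondKind_symTensorForm, hR.apply_self_left]
  have hbianchi : R y z x w = R x z y w - R x y z w := by
    linear_combination hR.bianchi x y z w - hR.antisymm_left x z y w
  rw [hR.antisymm_right x y z w, hR.pair_symm y z x w, hR.antisymm_left x y z w,
    hR.swap_pairs x y z w, hR.pair_symm x z y w, hbianchi]
  ring

lemma IsAlgCurvatureTensor.complexSectional_nonneg (hR : IsAlgCurvatureTensor R)
    (hnn : ∀ φ, IsTracelessSymForm b φ → 0 ≤ secondKind b R φ φ) {x y z w : V}
    (hxz : ⟪x, z⟫ = 0) (hyw : ⟪y, w⟫ = 0) (hxw : ⟪x, w⟫ = 0) (hyz : ⟪y, z⟫ = 0) (l m : ℝ) :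
    0 ≤ R x z x z + l ^ 2 * R x w x w + m ^ 2 * R y z y z + l ^ 2 * m ^ 2 * R y w y w
      - 2 * l * m * R x y z w := by
  have key (l : ℝ) : 0 ≤ 2 * (R x z x z + l ^ 2 * R x w x w + m ^ 2 * R y z y z
      + l ^ 2 * m ^ 2 * R y w y w) + 12 * l * m * R x y z w := by
    rw [← hR.secondKind_add_secondKind]
    refine add_nonneg (hnn _ ?_) (hnn _ ?_)
    · exact (isTracelessSymForm_symTensorForm hxz).add
        ((isTracelessSymForm_symTensorForm hyw).smul _)
    · exact ((isTracelessSymForm_symTensorForm hxw).smul l).add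
        ((isTracelessSymForm_symTensorForm hyz).smul m)
  have hneg := key (-l)
  rw [neg_sq] at hneg
  linarith [key l]

end SecondKind

theorem stmt_15_general {n : ℕ}
    (b : OrthonormalBasis (Fin n) ℝ V)
    (R : V →ₗ[ℝ] V →ₗ[ℝ] V →ₗ[ℝ] V →ₗ[ℝ] ℝ)
    (hR : IsAlgCurvatureTensor R)
    (hnn : ∀ φ : V →ₗ[ℝ] V →ₗ[ℝ] ℝ, IsTracelessSymForm b φ →
      0 ≤ secondKind b R φ φ) :
    ∀ e : Fin 4 → V, Orthonormal ℝ e →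
      ∀ lam ∈ Set.Icc (-1 : ℝ) 1, ∀ mu ∈ Set.Icc (-1 : ℝ) 1,
      0 ≤ R (e 0) (e 2) (e 0) (e 2) + lam ^ 2 * R (e 0) (e 3) (e 0) (e 3)
          + mu ^ 2 * R (e 1) (e 2) (e 1) (e 2)
          + lam ^ 2 * mu ^ 2 * R (e 1) (e 3) (e 1) (e 3)
          - 2 * lam * mu * R (e 0) (e 1) (e 2) (e 3) := by
  intro e he lam _ mu _
  exact hR.complexSectional_nonneg b hnn (he.2 (by decide : (0 : Fin 4) ≠ 2))
    (he.2 (by decide : (1 : Fin 4) ≠ 3)) (he.2 (by decide : (0 : Fin 4) ≠ 3))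
    (he.2 (by decide : (1 : Fin 4) ≠ 2)) lam mu

theorem stmt_15 {n : ℕ} (hn : 4 ≤ n)
    (b : OrthonormalBasis (Fin n) ℝ V)
    (R : V →ₗ[ℝ] V →ₗ[ℝ] V →ₗ[ℝ] V →ₗ[ℝ] ℝ)
    (hR : IsAlgCurvatureTensor R)
    (hnn : ∀ φ : V →ₗ[ℝ] V →ₗ[ℝ] ℝ, IsTracelessSymForm b φ →
      0 ≤ secondKind b R φ φ) :
    ∀ e : Fin 4 → V, Orthonormal ℝ e →
      ∀ lam ∈ Set.Icc (-1 : ℝ) 1, ∀ mu ∈ Set.Icc (-1 : ℝ) 1,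
      0 ≤ R (e 0) (e 2) (e 0) (e 2) + lam ^ 2 * R (e 0) (e 3) (e 0) (e 3)
          + mu ^ 2 * R (e 1) (e 2) (e 1) (e 2)
          + lam ^ 2 * mu ^ 2 * R (e 1) (e 3) (e 1) (e 3)
          - 2 * lam * mu * R (e 0) (e 1) (e 2) (e 3) :=
  stmt_15_general b R hR hnn
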